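/- arXiv:2009.13749 — 3 statements merged into one kernel-verified Lean document; each statement's English description precedes it below -/
import Mathlib

section
/- Let M ∈ ℝ^{d×d} admit a factorization M = H L H⁻¹ with H invertible, ‖L‖ ≤ 1 − γ and ‖H‖·‖H⁻¹‖ ≤ κ, for some κ > 0 and 0 < γ ≤ 1. Let W ∈ ℝ^{d×d} be symmetric, let X ∈ ℝ^{d×d} satisfy the fixed-point equation X = M X Mᵀ + W, and let a sequence of symmetric matrices (X̂_t)_{t≥0} evolve by X̂_{t+1} = M X̂_t Mᵀ + W. Then for every t ≥ 0, ‖X̂_t − X‖ ≤ κ²(1 − γ)^{2t}‖X̂_0 − X‖ ≤ κ² e^{−2γt}‖X̂_0 − X‖, where ‖·‖ is the spectral norm. -/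
open Matrix

/-- Spectral (ℓ₂ operator) norm of a real matrix. -/
noncomputable def sNorm {m n : Type*} [Fintype m] [Fintype n] [DecidableEq n]
    (M : Matrix m n ℝ) : ℝ :=
  ‖LinearMap.toContinuousLinearMap (Matrix.toEuclideanLin M)‖

/-- Frobenius norm of a real matrix. -/
noncomputable def fNorm {m n : Type*} [Fintype m] [Fintype n] (M : Matrix m n ℝ) : ℝ :=
  Real.sqrt (Matrix.trace (Mᵀ * M))

/-- `K` is `(κ,γ)`-strongly stable for the pair `(A,B)`. -/
def StronglyStable {d k : ℕ} (A : Matrix (Fin d) (Fin d) ℝ) (B : Matrix (Fin d) (Fin k) ℝ)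
    (K : Matrix (Fin k) (Fin d) ℝ) (κ γ : ℝ) : Prop :=
  0 < κ ∧ 0 < γ ∧ γ ≤ 1 ∧ sNorm K ≤ κ ∧
    ∃ H L : Matrix (Fin d) (Fin d) ℝ, IsUnit H ∧ A + B * K = H * L * H⁻¹ ∧
      sNorm L ≤ 1 - γ ∧ sNorm H * sNorm H⁻¹ ≤ κ

/-- The feasible set of the SDP relaxation of LQ control. -/
def Feasible {d k : ℕ} (A : Matrix (Fin d) (Fin d) ℝ) (B : Matrix (Fin d) (Fin k) ℝ)
    (W : Matrix (Fin d) (Fin d) ℝ) (ν : ℝ)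
    (Sg : Matrix (Fin d ⊕ Fin k) (Fin d ⊕ Fin k) ℝ) : Prop :=
  Sg.PosSemidef ∧ Sg.trace ≤ ν ∧
    Sg.toBlocks₁₁ = fromCols A B * Sg * (fromCols A B)ᵀ + W

/-- The controller `K = Σ_{xu}ᵀ Σ_{xx}⁻¹` extracted from an SDP point. -/
noncomputable def extractK {d k : ℕ} (Sg : Matrix (Fin d ⊕ Fin k) (Fin d ⊕ Fin k) ℝ) :
    Matrix (Fin k) (Fin d) ℝ :=
  (Sg.toBlocks₁₂)ᵀ * (Sg.toBlocks₁₁)⁻¹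

/-- The exploration covariance `V = Σ_{uu} - K Σ_{xx} Kᵀ` extracted from an SDP point. -/
noncomputable def extractV {d k : ℕ} (Sg : Matrix (Fin d ⊕ Fin k) (Fin d ⊕ Fin k) ℝ) :
    Matrix (Fin k) (Fin k) ℝ :=
  Sg.toBlocks₂₂ - extractK Sg * Sg.toBlocks₁₁ * (extractK Sg)ᵀ

/-! The error `Eₜ = X̂ₜ - X` obeys the homogeneous recursion `Eₜ₊₁ = M Eₜ Mᵀ`, so
`Eₜ = Mᵗ E₀ (Mᵀ)ᵗ`. Conjugating by `H` gives `‖Mᵗ‖ = ‖H Lᵗ H⁻¹‖ ≤ κ (1 - γ)ᵗ`, and the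
transpose has the same spectral norm, whence the factor `κ² (1 - γ)²ᵗ`; finally
`1 - γ ≤ e^{-γ}`. -/

open scoped Matrix.Norms.L2Operator

theorem sNorm_eq_norm {m n : Type*} [Fintype m] [Fintype n] [DecidableEq n]
    (A : Matrix m n ℝ) : sNorm A = ‖A‖ := rfl

theorem sub_eq_pow_mul_mul_pow_of_affine_recursion {R : Type*} [Ring R] {a b w x : R}
    {y : ℕ → R} (hx : x = a * x * b + w) (hy : ∀ t, y (t + 1) = a * y t * b + w) (t : ℕ) :
    y t - x = a ^ t * (y 0 - x) * b ^ t := by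
  induction t with
  | zero => simp
  | succ t ih =>
    have hstep : y (t + 1) - x = a * (y t - x) * b := by
      conv_lhs => rw [hy t, hx]
      noncomm_ring
    rw [hstep, ih, pow_succ', pow_succ]
    noncomm_ring

theorem Units.norm_conj_pow_le {R : Type*} [SeminormedRing R] (u : Rˣ) (a : R) (n : ℕ) :
    ‖((u : R) * a * ↑u⁻¹) ^ n‖ ≤ ‖(u : R)‖ * ‖(↑u⁻¹ : R)‖ * ‖a‖ ^ n := by
  rw [Units.conj_pow]
  rcases n.eq_zero_or_pos with rfl | hn
  · simpa using norm_mul_le (u : R) ↑u⁻¹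
  · calc ‖(u : R) * a ^ n * ↑u⁻¹‖ ≤ ‖(u : R)‖ * ‖a ^ n‖ * ‖(↑u⁻¹ : R)‖ := norm_mul₃_le
      _ ≤ ‖(u : R)‖ * ‖a‖ ^ n * ‖(↑u⁻¹ : R)‖ := by gcongr; exact norm_pow_le' a hn
      _ = ‖(u : R)‖ * ‖(↑u⁻¹ : R)‖ * ‖a‖ ^ n := by ring

theorem Matrix.l2_opNorm_transpose {n : Type*} [Fintype n] [DecidableEq n]
    (A : Matrix n n ℝ) : ‖Aᵀ‖ = ‖A‖ := by
  rw [← conjTranspose_eq_transpose_of_trivial, l2_opNorm_conjTranspose]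

theorem Matrix.l2_opNorm_pow_mul_mul_transpose_pow_le {n : Type*} [Fintype n] [DecidableEq n]
    (A E : Matrix n n ℝ) (t : ℕ) : ‖A ^ t * E * Aᵀ ^ t‖ ≤ ‖A ^ t‖ ^ 2 * ‖E‖ := by
  calc ‖A ^ t * E * Aᵀ ^ t‖ ≤ ‖A ^ t‖ * ‖E‖ * ‖(A ^ t)ᵀ‖ := by
        rw [transpose_pow]; exact norm_mul₃_le
    _ = ‖A ^ t‖ ^ 2 * ‖E‖ := by rw [l2_opNorm_transpose]; ring

theorem Real.one_sub_pow_le_exp_neg_mul {γ : ℝ} (hγ : γ ≤ 1) (n : ℕ) :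
    (1 - γ) ^ n ≤ Real.exp (-(γ * n)) := by
  calc (1 - γ) ^ n ≤ Real.exp (-γ) ^ n :=
        pow_le_pow_left₀ (by linarith) (Real.one_sub_le_exp_neg γ) n
    _ = Real.exp (-(γ * n)) := by rw [← Real.exp_nat_mul]; ring_nf

theorem stmt1_general {d : ℕ} (M H L W X : Matrix (Fin d) (Fin d) ℝ) (κ γ : ℝ)
    (hH : IsUnit H) (hM : M = H * L * H⁻¹) (hL : sNorm L ≤ 1 - γ)
    (hHκ : sNorm H * sNorm H⁻¹ ≤ κ)
    (hX : X = M * X * Mᵀ + W)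
    (Xh : ℕ → Matrix (Fin d) (Fin d) ℝ)
    (hrec : ∀ t, Xh (t + 1) = M * Xh t * Mᵀ + W) (t : ℕ) :
    sNorm (Xh t - X) ≤ κ ^ 2 * (1 - γ) ^ (2 * t) * sNorm (Xh 0 - X) ∧
      κ ^ 2 * (1 - γ) ^ (2 * t) * sNorm (Xh 0 - X) ≤
        κ ^ 2 * Real.exp (-(2 * γ * (t : ℝ))) * sNorm (Xh 0 - X) := by
  simp only [sNorm_eq_norm] at hL hHκ ⊢
  obtain ⟨u, rfl⟩ := hH
  rw [← coe_units_inv] at hM hHκ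
  have hγ1 : γ ≤ 1 := by linarith [norm_nonneg L]
  have hMt : ‖M ^ t‖ ≤ κ * (1 - γ) ^ t := by
    rw [hM]
    refine (u.norm_conj_pow_le L t).trans ?_
    gcongr
    exact (by positivity : (0 : ℝ) ≤ _).trans hHκ
  constructor
  · calc ‖Xh t - X‖ = ‖M ^ t * (Xh 0 - X) * Mᵀ ^ t‖ := by
          rw [sub_eq_pow_mul_mul_pow_of_affine_recursion hX hrec]
      _ ≤ ‖M ^ t‖ ^ 2 * ‖Xh 0 - X‖ := l2_opNorm_pow_mul_mul_transpose_pow_le M _ t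
      _ ≤ (κ * (1 - γ) ^ t) ^ 2 * ‖Xh 0 - X‖ := by gcongr
      _ = κ ^ 2 * (1 - γ) ^ (2 * t) * ‖Xh 0 - X‖ := by ring
  · have hexp := Real.one_sub_pow_le_exp_neg_mul hγ1 (2 * t)
    push_cast at hexp
    calc κ ^ 2 * (1 - γ) ^ (2 * t) * ‖Xh 0 - X‖
        ≤ κ ^ 2 * Real.exp (-(γ * (2 * t))) * ‖Xh 0 - X‖ := by gcongr
      _ = κ ^ 2 * Real.exp (-(2 * γ * t)) * ‖Xh 0 - X‖ := by ring_nf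

/-- exponential convergence of the Lyapunov recursion to the
steady-state covariance for a strongly stable closed-loop matrix. -/
theorem stmt1 {d : ℕ} (M H L W X : Matrix (Fin d) (Fin d) ℝ) (κ γ : ℝ)
    (hκ : 0 < κ) (hγ0 : 0 < γ) (hγ1 : γ ≤ 1)
    (hH : IsUnit H) (hM : M = H * L * H⁻¹) (hL : sNorm L ≤ 1 - γ)
    (hHκ : sNorm H * sNorm H⁻¹ ≤ κ)
    (hW : W.IsSymm) (hX : X = M * X * Mᵀ + W)
    (Xh : ℕ → Matrix (Fin d) (Fin d) ℝ) (hXh : ∀ t, (Xh t).IsSymm)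
    (hrec : ∀ t, Xh (t + 1) = M * Xh t * Mᵀ + W) (t : ℕ) :
    sNorm (Xh t - X) ≤ κ ^ 2 * (1 - γ) ^ (2 * t) * sNorm (Xh 0 - X) ∧
      κ ^ 2 * (1 - γ) ^ (2 * t) * sNorm (Xh 0 - X) ≤
        κ ^ 2 * Real.exp (-(2 * γ * (t : ℝ))) * sNorm (Xh 0 - X) :=
  stmt1_general M H L W X κ γ hH hM hL hHκ hX Xh hrec t
end

section
/- Assume W ⪰ σ²I with σ > 0, and let Σ be any matrix in the SDP feasible set S. Then (Σ)_{xx} is invertible and the extracted controller K = (Σ)_{xu}ᵀ (Σ)_{xx}⁻¹ is (√ν/σ, σ²/(2ν))-strongly stable for the pair (A,B). -/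
open Matrix

/-!
Write `X = Σ_xx`, `S = Σ_xu`, `U = Σ_uu`, `K = Sᵀ X⁻¹` and `M = A + B K`. Since
`X = (A B) Σ (A B)ᵀ + W ⪰ W ⪰ σ² I`, `X` is positive definite, so the Schur complement
`V = U - K X Kᵀ` of `X` in `Σ` is positive semidefinite. Substituting `S = X Kᵀ` turns the
feasibility equation into the Lyapunov identity `X = M X Mᵀ + B V Bᵀ + W`, hence
`M X Mᵀ ⪯ X - σ² I ⪯ (1 - σ²/ν) X`, because `X ⪯ (tr X) I ⪯ ν I`. For `H = X^{1/2}` and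
`L = H⁻¹ M H` this reads `L Lᵀ ⪯ (1 - σ²/ν) I`, so `‖L‖ ≤ √(1 - σ²/ν) ≤ 1 - σ²/(2ν)`, while
`‖H‖ ≤ √ν` and `‖H⁻¹‖ ≤ 1/σ`. Finally `σ² K Kᵀ ⪯ K X Kᵀ ⪯ U ⪯ ν I` gives `‖K‖ ≤ √ν/σ`.
-/

open scoped MatrixOrder

lemma Real.sqrt_one_sub_le_one_sub_half {t : ℝ} (ht : t ≤ 2) : √(1 - t) ≤ 1 - t / 2 :=
  (Real.sqrt_le_left (by linarith)).mpr (by nlinarith [sq_nonneg t])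

namespace Matrix

variable {m n : Type*}

lemma PosSemidef.isSymm [Fintype n] {P : Matrix n n ℝ} (hP : P.PosSemidef) : P.IsSymm :=
  (conjTranspose_eq_transpose_of_trivial P).symm.trans hP.isHermitian

lemma IsSymm.toBlocks₁₁ {M : Matrix (m ⊕ n) (m ⊕ n) ℝ} (hM : M.IsSymm) :
    M.toBlocks₁₁ᵀ = M.toBlocks₁₁ :=
  (isSymm_fromBlocks_iff.mp (M.fromBlocks_toBlocks.symm ▸ hM)).1

lemma IsSymm.transpose_toBlocks₁₂ {M : Matrix (m ⊕ n) (m ⊕ n) ℝ} (hM : M.IsSymm) :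
    M.toBlocks₁₂ᵀ = M.toBlocks₂₁ :=
  (isSymm_fromBlocks_iff.mp (M.fromBlocks_toBlocks.symm ▸ hM)).2.1

lemma PosSemidef.mul_mul_transpose_same [Fintype m] [Fintype n] {P : Matrix n n ℝ}
    (hP : P.PosSemidef) (C : Matrix m n ℝ) : (C * P * Cᵀ).PosSemidef := by
  simpa only [conjTranspose_eq_transpose_of_trivial] using hP.mul_mul_conjTranspose_same C

lemma transpose_mul_mul_le_transpose_mul_mul [Fintype m] [Fintype n] {X Y : Matrix m m ℝ}
    (h : X ≤ Y) (C : Matrix m n ℝ) : Cᵀ * X * C ≤ Cᵀ * Y * C :=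
  le_iff.mpr <| by
    simpa only [transpose_transpose, Matrix.mul_sub, Matrix.sub_mul]
      using (le_iff.mp h).mul_mul_transpose_same Cᵀ

lemma posDef_of_smul_one_le [DecidableEq n] {X : Matrix n n ℝ} {c : ℝ} (hc : 0 < c)
    (h : c • 1 ≤ X) : X.PosDef := by
  simpa using (PosDef.one.smul hc).add_posSemidef (le_iff.mp h)

lemma le_of_smul_one_le_smul_one [DecidableEq n] [Nonempty n] {a b : ℝ}
    (h : a • (1 : Matrix n n ℝ) ≤ b • 1) : a ≤ b := by
  simpa [← sub_smul] using (le_iff.mp h).diag_nonneg (i := Classical.arbitrary n)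

lemma nonsing_inv_mul_mul_self_mul_nonsing_inv [Fintype n] [DecidableEq n] {H : Matrix n n ℝ}
    (hH : IsUnit H) : H⁻¹ * (H * H) * H⁻¹ = 1 := by
  have hdet := (isUnit_iff_isUnit_det H).mp hH
  rw [← mul_assoc, nonsing_inv_mul _ hdet, one_mul, mul_nonsing_inv _ hdet]

lemma transpose_mul_self_le_trace_smul_one [Fintype m] [Fintype n] [DecidableEq n]
    (C : Matrix m n ℝ) : Cᵀ * C ≤ (Cᵀ * C).trace • 1 := by
  refine le_iff.mpr (.of_dotProduct_mulVec_nonneg ?_ fun x => ?_)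
  · simp [IsHermitian, conjTranspose_eq_transpose_of_trivial, transpose_sub]
  simp only [star_trivial, sub_mulVec, dotProduct_sub, smul_mulVec, one_mulVec, dotProduct_smul,
    smul_eq_mul, ← mulVec_mulVec, dotProduct_mulVec x Cᵀ, vecMul_transpose, sub_nonneg]
  have hrow (i : m) : (C *ᵥ x) i ^ 2 ≤ (∑ j, C i j ^ 2) * (x ⬝ᵥ x) := by
    simpa [mulVec, dotProduct, sq] using Finset.sum_mul_sq_le_sq_mul_sq Finset.univ (C i) x
  have htrace : (Cᵀ * C).trace = ∑ i, ∑ j, C i j ^ 2 := by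
    simp only [trace, diag, mul_apply, transpose_apply, sq]
    exact Finset.sum_comm
  calc (C *ᵥ x) ⬝ᵥ (C *ᵥ x) = ∑ i, (C *ᵥ x) i ^ 2 := by simp only [dotProduct, sq]
    _ ≤ ∑ i, (∑ j, C i j ^ 2) * (x ⬝ᵥ x) := Finset.sum_le_sum fun i _ => hrow i
    _ = (Cᵀ * C).trace * (x ⬝ᵥ x) := by rw [htrace, Finset.sum_mul]

lemma PosSemidef.le_trace_smul_one [Fintype n] [DecidableEq n] {P : Matrix n n ℝ}
    (hP : P.PosSemidef) : P ≤ P.trace • 1 := by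
  obtain ⟨C, rfl⟩ := CStarAlgebra.nonneg_iff_eq_star_mul_self.mp hP.nonneg
  simpa only [star_eq_conjTranspose, conjTranspose_eq_transpose_of_trivial]
    using transpose_mul_self_le_trace_smul_one C

lemma trace_toBlocks₁₁_add_trace_toBlocks₂₂ [Fintype m] [Fintype n]
    (M : Matrix (m ⊕ n) (m ⊕ n) ℝ) : M.toBlocks₁₁.trace + M.toBlocks₂₂.trace = M.trace := by
  simp [trace, Fintype.sum_sum_type, toBlocks₁₁, toBlocks₂₂]

section TraceBound

variable [Fintype m] [Fintype n] {M : Matrix (m ⊕ n) (m ⊕ n) ℝ} (hM : M.PosSemidef) {ν : ℝ}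
  (h : M.trace ≤ ν)
include hM h

lemma PosSemidef.toBlocks₁₁_le_smul_one [DecidableEq m] : M.toBlocks₁₁ ≤ ν • 1 := by
  have htrace := trace_toBlocks₁₁_add_trace_toBlocks₂₂ M
  have h₂₂ : 0 ≤ M.toBlocks₂₂.trace := (hM.submatrix Sum.inr).trace_nonneg
  calc M.toBlocks₁₁ ≤ M.toBlocks₁₁.trace • 1 := (hM.submatrix Sum.inl).le_trace_smul_one
    _ ≤ ν • 1 := smul_le_smul_of_nonneg_right (by linarith) PosSemidef.one.nonneg

lemma PosSemidef.toBlocks₂₂_le_smul_one [DecidableEq n] : M.toBlocks₂₂ ≤ ν • 1 := by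
  have htrace := trace_toBlocks₁₁_add_trace_toBlocks₂₂ M
  have h₁₁ : 0 ≤ M.toBlocks₁₁.trace := (hM.submatrix Sum.inl).trace_nonneg
  calc M.toBlocks₂₂ ≤ M.toBlocks₂₂.trace • 1 := (hM.submatrix Sum.inr).le_trace_smul_one
    _ ≤ ν • 1 := smul_le_smul_of_nonneg_right (by linarith) PosSemidef.one.nonneg

end TraceBound

end Matrix

section SpectralNorm

variable {m n : Type*} [Fintype m] [Fintype n] [DecidableEq n]

lemma sNorm_le_of_transpose_mul_self_le (M : Matrix m n ℝ) {c : ℝ} (hc : 0 ≤ c)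
    (h : Mᵀ * M ≤ c ^ 2 • 1) : sNorm M ≤ c := by
  refine ContinuousLinearMap.opNorm_le_bound _ hc fun x => ?_
  have hquad := (le_iff.mp h).dotProduct_mulVec_nonneg x.ofLp
  simp only [sub_mulVec, ← mulVec_mulVec, dotProduct_sub, smul_mulVec, one_mulVec,
    dotProduct_smul, smul_eq_mul, star_trivial, dotProduct_mulVec _ Mᵀ, vecMul_transpose,
    sub_nonneg] at hquad
  have hsq : ‖toEuclideanLin M x‖ ^ 2 ≤ (c * ‖x‖) ^ 2 := by
    rw [mul_pow, ← real_inner_self_eq_norm_sq, ← real_inner_self_eq_norm_sq]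
    -- the inner product of `EuclideanSpace ℝ n` is the dot product by definition
    exact hquad
  exact (pow_le_pow_iff_left₀ (norm_nonneg _) (by positivity) two_ne_zero).mp hsq

open scoped Matrix.Norms.L2Operator in
lemma sNorm_transpose [DecidableEq m] (M : Matrix m n ℝ) : sNorm Mᵀ = sNorm M := by
  show ‖Mᵀ‖ = ‖M‖
  rw [← conjTranspose_eq_transpose_of_trivial, l2_opNorm_conjTranspose]

lemma sNorm_le_of_transpose_mul_mul_le [DecidableEq m] {X : Matrix m m ℝ} {C : Matrix m n ℝ}
    {σ ν : ℝ} (hσ : 0 < σ) (hν : 0 ≤ ν) (hX : σ ^ 2 • 1 ≤ X) (h : Cᵀ * X * C ≤ ν • 1) :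
    sNorm C ≤ √ν / σ := by
  have hC : σ ^ 2 • (Cᵀ * C) ≤ ν • 1 := by
    simpa [Matrix.mul_smul] using (transpose_mul_mul_le_transpose_mul_mul hX C).trans h
  refine sNorm_le_of_transpose_mul_self_le _ (by positivity) ?_
  have := smul_le_smul_of_nonneg_left hC (by positivity : (0 : ℝ) ≤ (σ ^ 2)⁻¹)
  rwa [smul_smul, inv_mul_cancel₀ (by positivity), one_smul, smul_smul, ← div_eq_inv_mul,
    ← Real.sq_sqrt hν, ← div_pow] at this

lemma sNorm_nonsing_inv_mul_mul_le {H M : Matrix n n ℝ} (hHt : Hᵀ = H) (hH : IsUnit H) {c : ℝ}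
    (hc : 0 ≤ c) (h : M * (H * H) * Mᵀ ≤ c • (H * H)) : sNorm (H⁻¹ * M * H) ≤ √c := by
  have hHinv : H⁻¹ᵀ = H⁻¹ := by rw [transpose_nonsing_inv, hHt]
  rw [← sNorm_transpose]
  refine sNorm_le_of_transpose_mul_self_le _ (Real.sqrt_nonneg c) ?_
  have hLLt : (H⁻¹ * M * H)ᵀᵀ * (H⁻¹ * M * H)ᵀ = H⁻¹ᵀ * (M * (H * H) * Mᵀ) * H⁻¹ := by
    simp only [transpose_transpose, transpose_mul, hHt, hHinv, Matrix.mul_assoc]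
  rw [hLLt, Real.sq_sqrt hc]
  simpa [hHinv, nonsing_inv_mul_mul_self_mul_nonsing_inv hH]
    using transpose_mul_mul_le_transpose_mul_mul h H⁻¹

end SpectralNorm

section ExtractedController

variable {d k : ℕ} {Sg : Matrix (Fin d ⊕ Fin k) (Fin d ⊕ Fin k) ℝ}

lemma extractK_mul_toBlocks₁₁ (hX : IsUnit Sg.toBlocks₁₁) :
    extractK Sg * Sg.toBlocks₁₁ = Sg.toBlocks₁₂ᵀ := by
  rw [extractK, Matrix.mul_assoc, nonsing_inv_mul _ ((isUnit_iff_isUnit_det _).mp hX),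
    Matrix.mul_one]

lemma toBlocks₁₁_mul_transpose_extractK (hSg : Sg.IsSymm) (hX : IsUnit Sg.toBlocks₁₁) :
    Sg.toBlocks₁₁ * (extractK Sg)ᵀ = Sg.toBlocks₁₂ := by
  rw [← hSg.toBlocks₁₁, ← transpose_mul, extractK_mul_toBlocks₁₁ hX, transpose_transpose]

lemma fromCols_mul_mul_transpose_fromCols_eq (A : Matrix (Fin d) (Fin d) ℝ)
    (B : Matrix (Fin d) (Fin k) ℝ) (hSg : Sg.IsSymm) (hX : IsUnit Sg.toBlocks₁₁) :
    fromCols A B * Sg * (fromCols A B)ᵀ =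
      (A + B * extractK Sg) * Sg.toBlocks₁₁ * (A + B * extractK Sg)ᵀ +
        B * extractV Sg * Bᵀ := by
  conv_lhs => rw [← Sg.fromBlocks_toBlocks, ← hSg.transpose_toBlocks₁₂,
    ← extractK_mul_toBlocks₁₁ hX, ← toBlocks₁₁_mul_transpose_extractK hSg hX]
  rw [fromCols_mul_fromBlocks, transpose_fromCols, fromCols_mul_fromRows, extractV]
  simp only [transpose_add, transpose_mul, Matrix.add_mul, Matrix.mul_add, Matrix.mul_sub,
    Matrix.sub_mul, Matrix.mul_assoc]
  abel

lemma extractV_posSemidef (hSg : Sg.PosSemidef) (hX : Sg.toBlocks₁₁.PosDef) :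
    (extractV Sg).PosSemidef := by
  have := hX.isUnit.invertible
  have hschur := (PosDef.fromBlocks₁₁ Sg.toBlocks₁₂ Sg.toBlocks₂₂ hX).mp <| by
    rwa [conjTranspose_eq_transpose_of_trivial, hSg.isSymm.transpose_toBlocks₁₂,
      fromBlocks_toBlocks]
  rwa [extractV, extractK_mul_toBlocks₁₁ hX.isUnit, extractK, transpose_mul, transpose_transpose,
    transpose_nonsing_inv, hSg.isSymm.toBlocks₁₁, ← Matrix.mul_assoc,
    ← conjTranspose_eq_transpose_of_trivial]

end ExtractedController

section Feasible

variable {d k : ℕ} {A : Matrix (Fin d) (Fin d) ℝ} {B : Matrix (Fin d) (Fin k) ℝ}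
  {W : Matrix (Fin d) (Fin d) ℝ} {ν σ : ℝ} {Sg : Matrix (Fin d ⊕ Fin k) (Fin d ⊕ Fin k) ℝ}

lemma Feasible.le_toBlocks₁₁ (hfeas : Feasible A B W ν Sg) : W ≤ Sg.toBlocks₁₁ := by
  rw [hfeas.2.2]
  exact le_add_of_nonneg_left (hfeas.1.mul_mul_transpose_same _).nonneg

lemma Feasible.posDef_toBlocks₁₁ (hfeas : Feasible A B W ν Sg) (hσ : 0 < σ)
    (hW : σ ^ 2 • 1 ≤ W) : Sg.toBlocks₁₁.PosDef :=
  posDef_of_smul_one_le (by positivity) (hW.trans hfeas.le_toBlocks₁₁)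

lemma Feasible.closedLoop_mul_mul_transpose_le (hfeas : Feasible A B W ν Sg) (hσ : 0 < σ)
    (hW : σ ^ 2 • 1 ≤ W) :
    (A + B * extractK Sg) * Sg.toBlocks₁₁ * (A + B * extractK Sg)ᵀ ≤
      Sg.toBlocks₁₁ - σ ^ 2 • 1 := by
  have hX := hfeas.posDef_toBlocks₁₁ hσ hW
  have hV := (extractV_posSemidef hfeas.1 hX).mul_mul_transpose_same B
  rw [le_sub_iff_add_le]
  conv_rhs => rw [hfeas.2.2, fromCols_mul_mul_transpose_fromCols_eq A B hfeas.1.isSymm hX.isUnit]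
  exact add_le_add (le_add_of_nonneg_right hV.nonneg) hW

lemma Feasible.sNorm_extractK_le (hfeas : Feasible A B W ν Sg) (hσ : 0 < σ)
    (hW : σ ^ 2 • 1 ≤ W) : sNorm (extractK Sg) ≤ √ν / σ := by
  have hKXK : extractK Sg * Sg.toBlocks₁₁ * (extractK Sg)ᵀ ≤ Sg.toBlocks₂₂ :=
    le_iff.mpr (extractV_posSemidef hfeas.1 (hfeas.posDef_toBlocks₁₁ hσ hW))
  rw [← sNorm_transpose]
  refine sNorm_le_of_transpose_mul_mul_le hσ (hfeas.1.trace_nonneg.trans hfeas.2.1)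
    (hW.trans hfeas.le_toBlocks₁₁) ?_
  rw [transpose_transpose]
  exact hKXK.trans (hfeas.1.toBlocks₂₂_le_smul_one hfeas.2.1)

end Feasible

lemma stronglyStable_of_lyapunov {d k : ℕ} {A : Matrix (Fin d) (Fin d) ℝ}
    {B : Matrix (Fin d) (Fin k) ℝ} {K : Matrix (Fin k) (Fin d) ℝ} {X : Matrix (Fin d) (Fin d) ℝ}
    {σ ν : ℝ} (hσ : 0 < σ) (hσν : σ ^ 2 ≤ ν) (hXσ : σ ^ 2 • 1 ≤ X) (hXν : X ≤ ν • 1)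
    (hM : (A + B * K) * X * (A + B * K)ᵀ ≤ X - σ ^ 2 • 1) (hK : sNorm K ≤ √ν / σ) :
    StronglyStable A B K (√ν / σ) (σ ^ 2 / (2 * ν)) := by
  have hν : 0 < ν := (pow_pos hσ 2).trans_le hσν
  have hX := posDef_of_smul_one_le (pow_pos hσ 2) hXσ
  obtain ⟨H, hHt, rfl⟩ : ∃ H : Matrix (Fin d) (Fin d) ℝ, Hᵀ = H ∧ H * H = X :=
    ⟨CFC.sqrt X, (CFC.sqrt_nonneg X).posSemidef.isSymm,
      CFC.sqrt_mul_sqrt_self X hX.posSemidef.nonneg⟩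
  have hH : IsUnit H := isUnit_of_mul_isUnit_left hX.isUnit
  have hdet := (isUnit_iff_isUnit_det H).mp hH
  have hratio : σ ^ 2 / ν ≤ 1 := (div_le_one hν).mpr hσν
  rw [show σ ^ 2 / (2 * ν) = σ ^ 2 / ν / 2 by ring]
  refine ⟨by positivity, by positivity, by linarith, hK, H, H⁻¹ * (A + B * K) * H, hH, ?_, ?_, ?_⟩
  · simp only [Matrix.mul_assoc, mul_nonsing_inv _ hdet, Matrix.mul_one,
      mul_nonsing_inv_cancel_left _ _ hdet]
  · have hcontract : (A + B * K) * (H * H) * (A + B * K)ᵀ ≤ (1 - σ ^ 2 / ν) • (H * H) := by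
      refine hM.trans ?_
      rw [sub_smul, one_smul]
      refine sub_le_sub_left ?_ _
      simpa [smul_smul, div_mul_cancel₀ _ hν.ne']
        using smul_le_smul_of_nonneg_left hXν (by positivity : 0 ≤ σ ^ 2 / ν)
    calc sNorm (H⁻¹ * (A + B * K) * H) ≤ √(1 - σ ^ 2 / ν) :=
          sNorm_nonsing_inv_mul_mul_le hHt hH (by linarith) hcontract
      _ ≤ 1 - σ ^ 2 / ν / 2 := Real.sqrt_one_sub_le_one_sub_half (by linarith)
  · have hHinv : sNorm H⁻¹ ≤ √1 / σ := by
      refine sNorm_le_of_transpose_mul_mul_le hσ zero_le_one hXσ ?_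
      rw [transpose_nonsing_inv, hHt, nonsing_inv_mul_mul_self_mul_nonsing_inv hH, one_smul]
    have hHnorm : sNorm H ≤ √ν :=
      sNorm_le_of_transpose_mul_self_le _ (Real.sqrt_nonneg ν) (by rwa [hHt, Real.sq_sqrt hν.le])
    calc sNorm H * sNorm H⁻¹ ≤ √ν * (√1 / σ) :=
          mul_le_mul hHnorm hHinv (norm_nonneg _) (Real.sqrt_nonneg ν)
      _ = √ν / σ := by rw [Real.sqrt_one, mul_one_div]

theorem stmt4_general {d k : ℕ} (hd : 0 < d)
    (A : Matrix (Fin d) (Fin d) ℝ) (B : Matrix (Fin d) (Fin k) ℝ)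
    (W : Matrix (Fin d) (Fin d) ℝ) (ν σ : ℝ) (hσ : 0 < σ)
    (hW : (W - σ ^ 2 • (1 : Matrix (Fin d) (Fin d) ℝ)).PosSemidef)
    (Sg : Matrix (Fin d ⊕ Fin k) (Fin d ⊕ Fin k) ℝ)
    (hfeas : Feasible A B W ν Sg) :
    IsUnit Sg.toBlocks₁₁ ∧
      StronglyStable A B (extractK Sg) (Real.sqrt ν / σ) (σ ^ 2 / (2 * ν)) := by
  have : Nonempty (Fin d) := ⟨⟨0, hd⟩⟩
  have hXσ : σ ^ 2 • 1 ≤ Sg.toBlocks₁₁ := (le_iff.mpr hW).trans hfeas.le_toBlocks₁₁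
  have hXν := hfeas.1.toBlocks₁₁_le_smul_one hfeas.2.1
  exact ⟨(posDef_of_smul_one_le (by positivity) hXσ).isUnit,
    stronglyStable_of_lyapunov hσ (le_of_smul_one_le_smul_one (hXσ.trans hXν)) hXσ hXν
      (hfeas.closedLoop_mul_mul_transpose_le hσ hW) (hfeas.sNorm_extractK_le hσ hW)⟩

/-- any feasible point of the SDP yields an invertible `Σ_{xx}` and a
`(√ν/σ, σ²/(2ν))`-strongly stable extracted controller. -/
theorem stmt4 {d k : ℕ} (hd : 0 < d)
    (A : Matrix (Fin d) (Fin d) ℝ) (B : Matrix (Fin d) (Fin k) ℝ)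
    (W : Matrix (Fin d) (Fin d) ℝ) (ν σ : ℝ) (hσ : 0 < σ) (hν : 0 < ν)
    (hW : (W - σ ^ 2 • (1 : Matrix (Fin d) (Fin d) ℝ)).PosSemidef)
    (Sg : Matrix (Fin d ⊕ Fin k) (Fin d ⊕ Fin k) ℝ)
    (hfeas : Feasible A B W ν Sg) :
    IsUnit Sg.toBlocks₁₁ ∧
      StronglyStable A B (extractK Sg) (Real.sqrt ν / σ) (σ ^ 2 / (2 * ν)) :=
  stmt4_general hd A B W ν σ hσ hW Sg hfeas
end

section
/- Let Σ = [[X, Yᵀ],[Y, U]] ∈ ℝ^{(d+k)×(d+k)} be a symmetric positive semidefinite block matrix with X ∈ ℝ^{d×d}, Y ∈ ℝ^{k×d}, U ∈ ℝ^{k×k}. Suppose X ⪰ σ²I for some σ > 0 and Tr(Σ) ≤ ν. Then X is invertible and the matrix K = Y X⁻¹ satisfies ‖K‖ ≤ √ν/σ in spectral norm. -/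
open Matrix

/-! Since `X ⪰ σ²I`, the controller `K = Y X⁻¹` satisfies `σ² K Kᵀ ⪯ K X Kᵀ = Y X⁻¹ Yᵀ`, and the
Schur complement of `X` gives `Y X⁻¹ Yᵀ ⪯ U`. Taking traces, `σ² ‖K‖_F² ≤ Tr U ≤ Tr Σ ≤ ν`, and
the spectral norm is at most the Frobenius norm. -/

section

variable {m n : Type*} [Fintype m] [Fintype n]

theorem sNorm_le_fNorm [DecidableEq n] (M : Matrix m n ℝ) : sNorm M ≤ fNorm M := by
  refine ContinuousLinearMap.opNorm_le_bound _ (Real.sqrt_nonneg _) fun x => ?_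
  have htrace : (Mᵀ * M).trace = ∑ i, ∑ j, M i j ^ 2 := by
    rw [trace, Finset.sum_comm]
    simp only [diag_apply, mul_apply, transpose_apply, sq]
  rw [EuclideanSpace.norm_eq, EuclideanSpace.norm_eq, fNorm,
    ← Real.sqrt_mul' _ (by positivity), htrace, Finset.sum_mul]
  refine Real.sqrt_le_sqrt ?_
  simp only [LinearMap.coe_toContinuousLinearMap', toLpLin_apply, Real.norm_eq_abs, sq_abs,
    mulVec, dotProduct]
  gcongr with i
  exact Finset.sum_mul_sq_le_sq_mul_sq _ _ _

namespace Matrix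

theorem trace_fromBlocks {R : Type*} [AddCommMonoid R] (A : Matrix n n R) (B : Matrix n m R)
    (C : Matrix m n R) (D : Matrix m m R) :
    (fromBlocks A B C D).trace = A.trace + D.trace := by
  simp [trace, Fintype.sum_sum_type]

omit [Fintype n] in
theorem PosSemidef.posDef_of_sub_smul_one [DecidableEq n] {X : Matrix n n ℝ} {c : ℝ}
    (hc : 0 < c) (hX : (X - c • 1).PosSemidef) : X.PosDef := by
  simpa using PosDef.posSemidef_add hX (PosDef.one.smul hc)

theorem PosSemidef.mul_trace_transpose_mul_inv_le [DecidableEq n] {X : Matrix n n ℝ} {c : ℝ}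
    (hc : 0 < c) (hX : (X - c • 1).PosSemidef) (Y : Matrix m n ℝ) :
    c * ((Y * X⁻¹)ᵀ * (Y * X⁻¹)).trace ≤ (Y * X⁻¹ * Yᵀ).trace := by
  have hXpd := hX.posDef_of_sub_smul_one hc
  have hXinv : X⁻¹ᵀ = X⁻¹ := by
    rw [transpose_nonsing_inv, ← conjTranspose_eq_transpose_of_trivial, hXpd.isHermitian.eq]
  have hconj : (Y * X⁻¹) * X * (Y * X⁻¹)ᵀ = Y * X⁻¹ * Yᵀ := by
    rw [transpose_mul, hXinv, Matrix.mul_assoc Y,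
      nonsing_inv_mul _ ((isUnit_iff_isUnit_det X).mp hXpd.isUnit), Matrix.mul_one,
      Matrix.mul_assoc]
  have hnonneg := (hX.mul_mul_conjTranspose_same (Y * X⁻¹)).trace_nonneg
  rw [conjTranspose_eq_transpose_of_trivial, Matrix.mul_sub, Matrix.sub_mul, trace_sub, hconj,
    Matrix.mul_smul, Matrix.smul_mul, Matrix.mul_one, trace_smul, smul_eq_mul] at hnonneg
  rw [trace_mul_comm]
  linarith

end Matrix

end

/-- norm bound for the controller extracted from a PSD block matrix with
`X ⪰ σ²I` and trace at most `ν`. -/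
theorem stmt5 {d k : ℕ} (X : Matrix (Fin d) (Fin d) ℝ) (Y : Matrix (Fin k) (Fin d) ℝ)
    (U : Matrix (Fin k) (Fin k) ℝ) (σ ν : ℝ) (hσ : 0 < σ)
    (hPSD : (fromBlocks X Yᵀ Y U).PosSemidef)
    (hX : (X - σ ^ 2 • (1 : Matrix (Fin d) (Fin d) ℝ)).PosSemidef)
    (htr : (fromBlocks X Yᵀ Y U).trace ≤ ν) :
    IsUnit X ∧ sNorm (Y * X⁻¹) ≤ Real.sqrt ν / σ := by
  have hσ2 : 0 < σ ^ 2 := by positivity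
  have hXpd : X.PosDef := hX.posDef_of_sub_smul_one hσ2
  refine ⟨hXpd.isUnit, ?_⟩
  have hschur : (U - Y * X⁻¹ * Yᵀ).PosSemidef := by
    have : Invertible X := hXpd.isUnit.invertible
    simpa using (PosDef.fromBlocks₁₁ Yᵀ U hXpd).mp (by simpa using hPSD)
  have hfrob : σ ^ 2 * ((Y * X⁻¹)ᵀ * (Y * X⁻¹)).trace ≤ ν :=
    calc σ ^ 2 * ((Y * X⁻¹)ᵀ * (Y * X⁻¹)).trace ≤ (Y * X⁻¹ * Yᵀ).trace :=
          hX.mul_trace_transpose_mul_inv_le hσ2 Y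
      _ ≤ U.trace := sub_nonneg.mp (trace_sub U _ ▸ hschur.trace_nonneg)
      _ ≤ X.trace + U.trace := le_add_of_nonneg_left hXpd.posSemidef.trace_nonneg
      _ ≤ ν := trace_fromBlocks X Yᵀ Y U ▸ htr
  calc sNorm (Y * X⁻¹) ≤ fNorm (Y * X⁻¹) := sNorm_le_fNorm _
    _ ≤ Real.sqrt (ν / σ ^ 2) := Real.sqrt_le_sqrt ((le_div_iff₀' hσ2).mpr hfrob)
    _ = Real.sqrt ν / σ := by rw [Real.sqrt_div' _ hσ2.le, Real.sqrt_sq hσ.le]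
end
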